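/- arXiv:2503.21574 — 4 statements merged into one kernel-verified Lean document; each statement's English description precedes it below -/
import Mathlib

section
/- Every infinite connected graph (countable vertex set) contains an infinite clique, a vertex with infinitely many pairwise nonadjacent neighbors (i.e., an induced K_{1,∞}), or an induced ray as an induced subgraph. -/
/-!
If some vertex has infinitely many neighbours, the infinite Ramsey theorem applied to its
neighbourhood gives an infinite clique or an induced `K_{1,∞}`. Otherwise the graph is locally
finite, so balls are finite, and Kőnig's argument yields a geodesic ray `f` from a base vertex
`v₀`, i.e. `dist v₀ (f n) = n`. A geodesic ray is induced: the distances to `v₀` of two adjacent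
vertices differ by at most one.
-/

open Function

namespace Set

variable {α : Type*} {s : Set α}

theorem Infinite.exists_subset_diff_singleton_infinite_forall_iff (r : α → α → Prop)
    (hs : s.Infinite) (a : α) :
    ∃ t ⊆ s \ {a}, t.Infinite ∧ ∃ p : Prop, ∀ b ∈ t, r a b ↔ p := by
  have : ((s \ {a}) ∩ {b | r a b} ∪ (s \ {a}) \ {b | r a b}).Infinite := by
    rw [inter_union_sdiff]
    exact hs.sdiff (finite_singleton a)
  rcases infinite_union.mp this with h | h
  · exact ⟨_, inter_subset_left, h, True, fun b hb => iff_true_intro hb.2⟩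
  · exact ⟨_, sdiff_subset, h, False, fun b hb => iff_false_intro hb.2⟩

theorem Infinite.exists_seq_rel_iff_of_lt (r : α → α → Prop) (hs : s.Infinite) :
    ∃ (f : ℕ → α) (c : ℕ → Prop), Injective f ∧ (∀ n, f n ∈ s) ∧
      ∀ m n, m < n → (r (f m) (f n) ↔ c m) := by
  have step (t : {t : Set α // t.Infinite}) : ∃ a ∈ t.1, ∃ t' : {t : Set α // t.Infinite},
      t'.1 ⊆ t.1 \ {a} ∧ ∃ p : Prop, ∀ b ∈ t'.1, r a b ↔ p := by
    obtain ⟨a, ha⟩ := t.2.nonempty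
    obtain ⟨t', ht't, ht', hp⟩ := t.2.exists_subset_diff_singleton_infinite_forall_iff r a
    exact ⟨a, ha, ⟨t', ht'⟩, ht't, hp⟩
  choose a ha next hnext c hc using step
  set T : ℕ → {t : Set α // t.Infinite} := fun n => next^[n] ⟨s, hs⟩
  have hT : Antitone fun n => (T n).1 := antitone_nat_of_succ_le fun n => by
    simp only [T, iterate_succ_apply']
    exact (hnext _).trans sdiff_subset
  have hlater : ∀ m n, m < n → a (T n) ∈ (next (T m)).1 := fun m n hmn => by
    simpa only [T, iterate_succ_apply'] using hT hmn (ha (T n))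
  refine ⟨fun n => a (T n), fun n => c (T n),
    Injective.of_lt_imp_ne fun m n hmn h => (hnext _ (hlater m n hmn)).2 h.symm,
    fun n => hT (Nat.zero_le n) (ha (T n)), fun m n hmn => hc _ _ (hlater m n hmn)⟩

theorem Infinite.exists_subset_infinite_pairwise_or_pairwise_not {r : α → α → Prop}
    (hr : ∀ a b, r a b → r b a) (hs : s.Infinite) :
    ∃ t ⊆ s, t.Infinite ∧ (t.Pairwise r ∨ t.Pairwise fun a b => ¬ r a b) := by
  obtain ⟨f, c, hf, hfs, hfc⟩ := hs.exists_seq_rel_iff_of_lt r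
  obtain ⟨p, hp⟩ := Finite.exists_infinite_fiber c
  have hpair : (c ⁻¹' {p}).Pairwise fun m n => r (f m) (f n) ↔ p := by
    intro m (hm : c m = p) n (hn : c n = p) hmn
    rcases hmn.lt_or_gt with h | h
    · exact hm ▸ hfc m n h
    · exact (Iff.intro (hr _ _) (hr _ _)).trans (hn ▸ hfc n m h)
  refine ⟨f '' (c ⁻¹' {p}), image_subset_iff.2 fun n _ => hfs n,
    (infinite_coe_iff.1 hp).image hf.injOn, ?_⟩
  by_cases hp : p
  · exact .inl (hpair.imp fun _ _ h => h.2 hp).image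
  · exact .inr (hpair.imp fun _ _ h hr => hp (h.1 hr)).image

end Set

namespace SimpleGraph

variable {V : Type*} {G : SimpleGraph V}

theorem Connected.exists_adj_dist_add_one_eq (hG : G.Connected) {u v : V} (hne : u ≠ v) :
    ∃ w, G.Adj u w ∧ G.dist w v + 1 = G.dist u v := by
  obtain ⟨p, hp⟩ := hG.exists_walk_length_eq_dist u v
  cases p with
  | nil => exact absurd rfl hne
  | @cons _ w _ huw q =>
    refine ⟨w, huw, le_antisymm ?_ ?_⟩
    · rw [← hp, Walk.length_cons]
      exact Nat.add_le_add_right (dist_le q) 1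
    · calc G.dist u v ≤ G.dist u w + G.dist w v := hG.dist_triangle
        _ = G.dist w v + 1 := by rw [dist_eq_one_iff_adj.2 huw, add_comm]

theorem Connected.finite_setOf_dist_le (hG : G.Connected)
    (hfin : ∀ v, (G.neighborSet v).Finite) (v : V) (n : ℕ) : {w | G.dist v w ≤ n}.Finite := by
  induction n with
  | zero => simp [hG.dist_eq_zero_iff]
  | succ n ih =>
    refine ((Set.finite_singleton v).union (ih.biUnion fun u _ => hfin u)).subset fun w hw => ?_
    rcases eq_or_ne w v with rfl | hne
    · exact .inl rfl
    obtain ⟨u, hwu, hu⟩ := hG.exists_adj_dist_add_one_eq hne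
    refine .inr (Set.mem_biUnion (x := u) ?_ hwu.symm)
    simp only [Set.mem_ofPred_eq, dist_comm (u := v)] at hw ⊢
    omega

def beyond (G : SimpleGraph V) (v₀ v : V) : Set V :=
  {w | G.dist v₀ w = G.dist v₀ v + G.dist v w}

theorem Connected.exists_adj_mem_beyond (hG : G.Connected) {v₀ v w : V}
    (hw : w ∈ G.beyond v₀ v) (hlt : G.dist v₀ v < G.dist v₀ w) :
    ∃ u, G.Adj v u ∧ G.dist v₀ u = G.dist v₀ v + 1 ∧ w ∈ G.beyond v₀ u := by
  have hne : v ≠ w := by rintro rfl; exact hlt.ne rfl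
  obtain ⟨u, hvu, hu⟩ := hG.exists_adj_dist_add_one_eq hne
  have h₁ : G.dist v₀ w ≤ G.dist v₀ u + G.dist u w := hG.dist_triangle
  have h₂ : G.dist v₀ u ≤ G.dist v₀ v + G.dist v u := hG.dist_triangle
  rw [dist_eq_one_iff_adj.2 hvu] at h₂
  simp only [beyond, Set.mem_ofPred_eq] at hw ⊢
  exact ⟨u, hvu, by omega, by omega⟩

theorem Connected.exists_adj_infinite_beyond (hG : G.Connected)
    (hfin : ∀ v, (G.neighborSet v).Finite) {v₀ v : V} (hv : (G.beyond v₀ v).Infinite) :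
    ∃ u, G.Adj v u ∧ G.dist v₀ u = G.dist v₀ v + 1 ∧ (G.beyond v₀ u).Infinite := by
  set N := {u | G.Adj v u ∧ G.dist v₀ u = G.dist v₀ v + 1}
  have hcover : G.beyond v₀ v \ {w | G.dist v₀ w ≤ G.dist v₀ v} ⊆ ⋃ u ∈ N, G.beyond v₀ u := by
    rintro w ⟨hw, hfar⟩
    obtain ⟨u, hvu, hu, hwu⟩ := hG.exists_adj_mem_beyond hw (not_le.1 hfar)
    exact Set.mem_biUnion ⟨hvu, hu⟩ hwu
  by_contra! hN
  refine (hv.sdiff (hG.finite_setOf_dist_le hfin v₀ _)) (Set.Finite.subset ?_ hcover)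
  exact ((hfin v).subset fun u hu => hu.1).biUnion fun u hu => hN u hu.1 hu.2

theorem Connected.exists_geodesic_ray [Infinite V] (hG : G.Connected)
    (hfin : ∀ v, (G.neighborSet v).Finite) (v₀ : V) :
    ∃ f : ℕ → V, (∀ n, G.Adj (f n) (f (n + 1))) ∧ ∀ n, G.dist v₀ (f n) = n := by
  choose next hadj hdist hinf using
    fun v : {v // (G.beyond v₀ v).Infinite} => hG.exists_adj_infinite_beyond hfin v.2
  have hv₀ : (G.beyond v₀ v₀).Infinite := by simpa [beyond] using Set.infinite_univ
  let step (v : {v // (G.beyond v₀ v).Infinite}) : {v // (G.beyond v₀ v).Infinite} :=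
    ⟨next v, hinf v⟩
  refine ⟨fun n => (step^[n] ⟨v₀, hv₀⟩).1, fun n => ?_, fun n => ?_⟩
  · simp only [iterate_succ_apply']
    exact hadj _
  · induction n with
    | zero => exact dist_self
    | succ n ih =>
      simp only [iterate_succ_apply']
      exact (hdist _).trans (congrArg (· + 1) ih)

theorem adj_iff_of_forall_dist_eq {v₀ : V} {f : ℕ → V} (hadj : ∀ n, G.Adj (f n) (f (n + 1)))
    (hdist : ∀ n, G.dist v₀ (f n) = n) (m n : ℕ) :
    G.Adj (f m) (f n) ↔ m + 1 = n ∨ n + 1 = m := by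
  refine ⟨fun h => ?_, ?_⟩
  · have hne : m ≠ n := by rintro rfl; exact G.irrefl h
    have := h.diff_dist_adj (u := v₀)
    rw [hdist, hdist] at this
    omega
  · rintro (rfl | rfl)
    exacts [hadj m, (hadj n).symm]

end SimpleGraph

theorem stmt6_general {V : Type*} [Infinite V] (G : SimpleGraph V)
    (hG : G.Connected) :
    (∃ s : Set V, s.Infinite ∧ s.Pairwise G.Adj) ∨
    (∃ (v : V) (s : Set V), s ⊆ G.neighborSet v ∧ s.Infinite ∧
      s.Pairwise fun a b => ¬ G.Adj a b) ∨
    (∃ f : ℕ → V, Function.Injective f ∧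
      ∀ m n : ℕ, G.Adj (f m) (f n) ↔ (m + 1 = n ∨ n + 1 = m)) := by
  by_cases hdeg : ∃ v, (G.neighborSet v).Infinite
  · obtain ⟨v, hv⟩ := hdeg
    obtain ⟨t, hts, ht, hclique | hindep⟩ :=
      hv.exists_subset_infinite_pairwise_or_pairwise_not (r := G.Adj) fun _ _ h => h.symm
    · exact .inl ⟨t, ht, hclique⟩
    · exact .inr (.inl ⟨v, t, hts, ht, hindep⟩)
  · push Not at hdeg
    obtain ⟨v₀⟩ := hG.nonempty
    obtain ⟨f, hadj, hdist⟩ := hG.exists_geodesic_ray hdeg v₀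
    refine .inr (.inr ⟨f, fun m n h => ?_, SimpleGraph.adj_iff_of_forall_dist_eq hadj hdist⟩)
    simpa only [hdist] using congrArg (G.dist v₀) h

/-- Every countably infinite connected graph contains an infinite clique, a vertex with
infinitely many pairwise nonadjacent neighbors (an induced `K_{1,∞}`), or an induced ray. -/
theorem stmt6 {V : Type*} [Countable V] [Infinite V] (G : SimpleGraph V)
    (hG : G.Connected) :
    (∃ s : Set V, s.Infinite ∧ s.Pairwise G.Adj) ∨
    (∃ (v : V) (s : Set V), s ⊆ G.neighborSet v ∧ s.Infinite ∧
      s.Pairwise fun a b => ¬ G.Adj a b) ∨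
    (∃ f : ℕ → V, Function.Injective f ∧
      ∀ m n : ℕ, G.Adj (f m) (f n) ↔ (m + 1 = n ∨ n + 1 = m)) :=
  stmt6_general G hG
end

section
/- Let P and Q be two edge-disjoint u-v paths in a graph G chosen so that |E(P)| + |E(Q)| is minimum. If one of P, Q is the single edge uv, then the union P ∪ Q is an induced cycle of G. -/
open SimpleGraph

/-! A chord `ab` of the cycle `Q + uv` is a chord of the path `Q`, since `uv` is the only other
edge. Rerouting `Q` through `ab` yields a strictly shorter `u`-`v` path, which still avoids the
edge `uv`, so together with `P` it contradicts the minimality of `|E(P)| + |E(Q)|`. -/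

namespace SimpleGraph.Walk

variable {V : Type*} [DecidableEq V] {G : SimpleGraph V} {u v a b : V}

/-- Cut out the part of `q` between the first visits of `a` and of `b` and bridge it by the
edge `ab`; the part has length at least two because `ab` is not an edge of `q`. -/
theorem exists_isPath_length_lt_of_chord (q : G.Walk u v) (ha : a ∈ q.support)
    (hb : b ∈ q.support) (hab : G.Adj a b) (hchord : s(a, b) ∉ q.edges) :
    ∃ q' : G.Walk u v, q'.IsPath ∧ q'.edges ⊆ s(a, b) :: q.edges ∧ q'.length < q.length := by
  wlog hlt : (q.takeUntil a ha).length < (q.takeUntil b hb).length generalizing a b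
  · have hne : (q.takeUntil a ha).length ≠ (q.takeUntil b hb).length := fun h =>
      hab.ne (by rw [← q.getVert_length_takeUntil ha, h, q.getVert_length_takeUntil hb])
    rw [Sym2.eq_swap] at hchord ⊢
    exact this hb ha hab.symm hchord (by omega)
  have hb_le : (q.takeUntil b hb).length ≤ q.length := q.length_takeUntil_le_length hb
  have hgap : (q.takeUntil a ha).length + 1 ≠ (q.takeUntil b hb).length := by
    intro h
    refine hchord ((q.mk_mem_edges_iff_exists).2 ⟨(q.takeUntil a ha).length, by omega, ?_⟩)
    rw [h, q.getVert_length_takeUntil ha, q.getVert_length_takeUntil hb]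
  have hsplit := congrArg length (q.take_spec hb)
  rw [length_append] at hsplit
  let w := (q.takeUntil a ha).append (cons hab (q.dropUntil b hb))
  refine ⟨w.bypass, w.bypass_isPath, fun e he => ?_, ?_⟩
  · have he := w.edges_bypass_subset_edges he
    simp only [w, edges_append, edges_cons, List.mem_append, List.mem_cons] at he ⊢
    rcases he with he | he | he
    · exact .inr (q.edges_takeUntil_subset_edges ha he)
    · exact .inl he
    · exact .inr (q.edges_dropUntil_subset_edges hb he)
  · calc w.bypass.length ≤ w.length := w.length_bypass_le_length
      _ < q.length := by simp only [w, length_append, length_cons]; omega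

end SimpleGraph.Walk

theorem stmt10_general {V : Type*} (G : SimpleGraph V) (u v : V)
    (p q : G.Walk u v) (hp : p.IsPath) (hq : q.IsPath)
    (hdisj : ∀ e, e ∈ p.edges → e ∉ q.edges)
    (hmin : ∀ p' q' : G.Walk u v, p'.IsPath → q'.IsPath →
      (∀ e, e ∈ p'.edges → e ∉ q'.edges) →
      p.length + q.length ≤ p'.length + q'.length)
    (hp1 : p.length = 1) :
    (q.append p.reverse).IsCycle ∧
      ∀ a b, a ∈ (q.append p.reverse).support → b ∈ (q.append p.reverse).support →
        G.Adj a b → s(a, b) ∈ (q.append p.reverse).edges := by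
  classical
  obtain _ | ⟨hadj, _ | _⟩ := p <;> simp at hp1
  have huv_q : s(u, v) ∉ q.edges := hdisj _ (by simp)
  have hsupport : ∀ x ∈ (q.append (Walk.cons hadj .nil).reverse).support, x ∈ q.support := by
    simp +contextual [Walk.mem_support_append_iff, or_imp]
  refine ⟨?_, fun a b ha hb hab => ?_⟩
  · rw [← Walk.isCycle_reverse]
    simpa [Walk.cons_isCycle_iff, hq] using huv_q
  · by_contra hchord
    obtain ⟨q', hq', hedges, hlen⟩ := q.exists_isPath_length_lt_of_chord (hsupport a ha)
      (hsupport b hb) hab (fun h => hchord (by simp [h]))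
    have hab_uv : s(a, b) ≠ s(u, v) := fun h => hchord (by simp [h])
    have hle := hmin _ q' hp hq' fun e he he' => by
      simp only [Walk.edges_cons, Walk.edges_nil, List.mem_singleton] at he
      subst he
      rcases List.mem_cons.1 (hedges he') with h | h
      exacts [hab_uv h.symm, huv_q h]
    simp only [Walk.length_cons, Walk.length_nil] at hle
    omega

/-- If `P, Q` are edge-disjoint `u`-`v` paths with `|E(P)| + |E(Q)|` minimum and `P` is
the single edge `uv`, then `P ∪ Q` is an induced cycle of `G`. -/
theorem stmt10 {V : Type*} (G : SimpleGraph V) (u v : V) (huv : u ≠ v)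
    (p q : G.Walk u v) (hp : p.IsPath) (hq : q.IsPath)
    (hdisj : ∀ e, e ∈ p.edges → e ∉ q.edges)
    (hmin : ∀ p' q' : G.Walk u v, p'.IsPath → q'.IsPath →
      (∀ e, e ∈ p'.edges → e ∉ q'.edges) →
      p.length + q.length ≤ p'.length + q'.length)
    (hp1 : p.length = 1) :
    (q.append p.reverse).IsCycle ∧
      ∀ a b, a ∈ (q.append p.reverse).support → b ∈ (q.append p.reverse).support →
        G.Adj a b → s(a, b) ∈ (q.append p.reverse).edges :=
  stmt10_general G u v p q hp hq hdisj hmin hp1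
end

section
/- Let P and Q be two edge-disjoint u-v paths in a graph chosen with |E(P)| + |E(Q)| minimum. Then the vertices of V(P) ∩ V(Q) occur in the same order along P as along Q. -/
/-!
If `a` precedes `b` on `P` but follows it on `Q`, follow `P` from `u` to `a` and then `Q` from
`a` to `v`, and follow `Q` from `u` to `b` and then `P` from `b` to `v`. These two `u`-`v` walks
are edge-disjoint, avoid the segment of `P` between `a` and `b` and the segment of `Q` between
`b` and `a`, so they are strictly shorter in total; shortcutting them to paths contradicts
minimality.
-/

open SimpleGraph

namespace SimpleGraph.Walk

variable {V : Type*} [DecidableEq V] {G : SimpleGraph V} {u v a b : V}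

lemma mem_support_takeUntil_of_idxOf_le (p : G.Walk u v) (ha : a ∈ p.support)
    (hb : b ∈ p.support) (h : p.support.idxOf a ≤ p.support.idxOf b) :
    a ∈ (p.takeUntil b hb).support := by
  rw [← p.getVert_support_idxOf ha, ← getVert_takeUntil hb (by rwa [length_takeUntil])]
  exact getVert_mem_support _ _

lemma edges_takeUntil_subset_edges_takeUntil_of_idxOf_le (p : G.Walk u v) (ha : a ∈ p.support)
    (hb : b ∈ p.support) (h : p.support.idxOf a ≤ p.support.idxOf b) :
    (p.takeUntil a ha).edges ⊆ (p.takeUntil b hb).edges := by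
  rw [← takeUntil_takeUntil p hb (p.mem_support_takeUntil_of_idxOf_le ha hb h)]
  exact edges_takeUntil_subset_edges _ _

lemma IsTrail.disjoint_edges_takeUntil_dropUntil_of_idxOf_le {p : G.Walk u v} (hp : p.IsTrail)
    (ha : a ∈ p.support) (hb : b ∈ p.support) (h : p.support.idxOf a ≤ p.support.idxOf b) :
    (p.takeUntil a ha).edges.Disjoint (p.dropUntil b hb).edges :=
  List.disjoint_of_subset_left (p.edges_takeUntil_subset_edges_takeUntil_of_idxOf_le ha hb h)
    (hp.disjoint_edges_takeUntil_dropUntil hb)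

lemma exists_isPath_disjoint_edges_length_lt_of_crossing {p q : G.Walk u v} (hp : p.IsTrail)
    (hq : q.IsTrail) (hpq : p.edges.Disjoint q.edges) (hap : a ∈ p.support)
    (hbp : b ∈ p.support) (haq : a ∈ q.support) (hbq : b ∈ q.support)
    (hab : p.support.idxOf a < p.support.idxOf b) (hba : q.support.idxOf b < q.support.idxOf a) :
    ∃ p' q' : G.Walk u v, p'.IsPath ∧ q'.IsPath ∧ p'.edges.Disjoint q'.edges ∧
      p'.length + q'.length < p.length + q.length := by
  set r := (p.takeUntil a hap).append (q.dropUntil a haq)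
  set s := (q.takeUntil b hbq).append (p.dropUntil b hbp)
  have hrs : r.edges.Disjoint s.edges := by
    simp only [r, s, edges_append, List.disjoint_append_left, List.disjoint_append_right]
    refine ⟨⟨?_, (hq.disjoint_edges_takeUntil_dropUntil_of_idxOf_le hbq haq hba.le).symm⟩,
      ⟨hp.disjoint_edges_takeUntil_dropUntil_of_idxOf_le hap hbp hab.le, ?_⟩⟩
    · exact List.disjoint_of_subset_left (p.edges_takeUntil_subset_edges hap)
        (List.disjoint_of_subset_right (q.edges_takeUntil_subset_edges hbq) hpq)
    · exact List.disjoint_of_subset_left (q.edges_dropUntil_subset_edges haq)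
        (List.disjoint_of_subset_right (p.edges_dropUntil_subset_edges hbp) hpq.symm)
  have hrs_length : r.length + s.length < p.length + q.length := by
    have hbp_le := p.length_takeUntil_le_length hbp
    have haq_le := q.length_takeUntil_le_length haq
    simp only [r, s, length_append, length_takeUntil, length_dropUntil] at hbp_le haq_le ⊢
    omega
  have hr_le := r.length_bypass_le_length
  have hs_le := s.length_bypass_le_length
  exact ⟨r.bypass, s.bypass, r.bypass_isPath, s.bypass_isPath,
    List.disjoint_of_subset_left r.edges_bypass_subset_edges
      (List.disjoint_of_subset_right s.edges_bypass_subset_edges hrs), by omega⟩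

end SimpleGraph.Walk

/-- If `P, Q` are edge-disjoint `u`-`v` paths with `|E(P)| + |E(Q)|` minimum, then the
common vertices of `P` and `Q` occur in the same order along `P` as along `Q`. -/
theorem stmt12 {V : Type*} [DecidableEq V] (G : SimpleGraph V) (u v : V)
    (p q : G.Walk u v) (hp : p.IsPath) (hq : q.IsPath)
    (hdisj : ∀ e, e ∈ p.edges → e ∉ q.edges)
    (hmin : ∀ p' q' : G.Walk u v, p'.IsPath → q'.IsPath →
      (∀ e, e ∈ p'.edges → e ∉ q'.edges) →
      p.length + q.length ≤ p'.length + q'.length) :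
    ∀ a b, a ∈ p.support → b ∈ p.support → a ∈ q.support → b ∈ q.support →
      (p.support.idxOf a ≤ p.support.idxOf b ↔
        q.support.idxOf a ≤ q.support.idxOf b) := by
  have no_crossing : ∀ a b, a ∈ p.support → b ∈ p.support → a ∈ q.support → b ∈ q.support →
      p.support.idxOf a < p.support.idxOf b → ¬ q.support.idxOf b < q.support.idxOf a := by
    intro a b hap hbp haq hbq hab hba
    obtain ⟨p', q', hp', hq', hpq', hlt⟩ := Walk.exists_isPath_disjoint_edges_length_lt_of_crossing
      hp.isTrail hq.isTrail (fun e => hdisj e) hap hbp haq hbq hab hba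
    exact (hmin p' q' hp' hq' fun e => @hpq' e).not_gt hlt
  intro a b hap hbp haq hbq
  constructor
  · intro hab
    by_contra! hba
    have hne : a ≠ b := by rintro rfl; exact hba.false
    exact no_crossing a b hap hbp haq hbq (hab.lt_of_ne (mt (List.idxOf_inj hap).1 hne)) hba
  · intro hab
    by_contra! hba
    have hne : a ≠ b := by rintro rfl; exact hba.false
    exact no_crossing b a hbp hap hbq haq hba (hab.lt_of_ne (mt (List.idxOf_inj haq).1 hne))
end

section
/- In a ladder (L, P, Q) with rails P = p_1...p_ℓ and Q = q_1...q_m in which all crosses are trivial, for any integer value h there are at most two rungs p_i q_j with i + j = h, and if there are two rungs of the same value then they form a trivial cross. -/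
/-!
Two distinct rungs of the same value `i + j = i' + j'` with `i < i'` must have `j' < j`, so they
cross; as every cross is trivial, `i' = i + 1` and `j = j' + 1`. Hence the `P`-indices of the rungs
of a fixed value are pairwise consecutive, which leaves room for at most two of them.
-/

theorem Set.ncard_le_two_of_pairwise_succ {s : Set ℕ}
    (hs : ∀ a ∈ s, ∀ b ∈ s, a < b → b = a + 1) : s.ncard ≤ 2 := by
  obtain hfin | hinf := s.finite_or_infinite
  · by_contra! h
    obtain ⟨a, ha, b, hb, c, hc, hab, hac, hbc⟩ := (Set.two_lt_ncard hfin).mp h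
    have := hs a ha b hb; have := hs b hb a ha
    have := hs a ha c hc; have := hs c hc a ha
    have := hs b hb c hc; have := hs c hc b hb
    omega
  · simp [hinf.ncard]

section Ladder

variable {l m : ℕ} {R : Fin l → Fin m → Prop}
  (hcross : ∀ (a c : Fin l) (b d : Fin m), R a b → R c d →
    (a : ℕ) < c → (d : ℕ) < b → ((c : ℕ) = a + 1 ∧ (b : ℕ) = d + 1))
include hcross

theorem succ_of_rungs_of_same_value {i i' : Fin l} {j j' : Fin m} (hij : R i j) (hij' : R i' j')
    (hval : (i : ℕ) + j = i' + j') (hlt : (i : ℕ) < i') :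
    (i' : ℕ) = i + 1 ∧ (j : ℕ) = j' + 1 :=
  hcross i i' j j' hij hij' hlt (by omega)

theorem trivial_cross_of_rungs_of_same_value {i i' : Fin l} {j j' : Fin m}
    (hij : R i j) (hij' : R i' j') (hval : (i : ℕ) + j = i' + j') (hne : (i, j) ≠ (i', j')) :
    ((i : ℕ) < i' ∧ (j' : ℕ) < j ∧ (i' : ℕ) = i + 1 ∧ (j : ℕ) = j' + 1) ∨
      ((i' : ℕ) < i ∧ (j : ℕ) < j' ∧ (i : ℕ) = i' + 1 ∧ (j' : ℕ) = j + 1) := by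
  have hii' : (i : ℕ) ≠ i' := by
    intro h
    obtain rfl : i = i' := Fin.ext h
    obtain rfl : j = j' := Fin.ext (by omega)
    exact hne rfl
  rcases lt_or_gt_of_ne hii' with hlt | hlt
  · obtain ⟨hi', hj⟩ := succ_of_rungs_of_same_value hcross hij hij' hval hlt
    exact Or.inl ⟨hlt, by omega, hi', hj⟩
  · obtain ⟨hi, hj'⟩ := succ_of_rungs_of_same_value hcross hij' hij hval.symm hlt
    exact Or.inr ⟨hlt, by omega, hi, hj'⟩

theorem ncard_rungs_of_value_le_two (h : ℕ) :
    {x : Fin l × Fin m | R x.1 x.2 ∧ (x.1 : ℕ) + (x.2 : ℕ) = h}.ncard ≤ 2 := by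
  set S := {x : Fin l × Fin m | R x.1 x.2 ∧ (x.1 : ℕ) + (x.2 : ℕ) = h}
  have hinj : S.InjOn (fun x ↦ (x.1 : ℕ)) := fun x hx y hy hxy ↦
    Prod.ext (Fin.ext hxy) (Fin.ext (by simp only [S, Set.mem_ofPred_eq] at hx hy hxy; omega))
  rw [← hinj.ncard_image]
  refine Set.ncard_le_two_of_pairwise_succ ?_
  rintro _ ⟨x, ⟨hx, hxh⟩, rfl⟩ _ ⟨y, ⟨hy, hyh⟩, rfl⟩ hlt
  exact (succ_of_rungs_of_same_value hcross hx hy (hxh.trans hyh.symm) hlt).1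

end Ladder

theorem stmt14_general {V : Type*} (L : SimpleGraph V) (l m : ℕ)
    (p : Fin l → V) (q : Fin m → V)
    (hcross : ∀ (a c : Fin l) (b d : Fin m), L.Adj (p a) (q b) → L.Adj (p c) (q d) →
      (a : ℕ) < c → (d : ℕ) < b → ((c : ℕ) = a + 1 ∧ (b : ℕ) = d + 1)) :
    ∀ h : ℕ,
      Set.ncard {x : Fin l × Fin m |
        L.Adj (p x.1) (q x.2) ∧ (x.1 : ℕ) + (x.2 : ℕ) = h} ≤ 2 ∧
      ∀ (i i' : Fin l) (j j' : Fin m), L.Adj (p i) (q j) → L.Adj (p i') (q j') →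
        (i : ℕ) + (j : ℕ) = h → (i' : ℕ) + (j' : ℕ) = h → (i, j) ≠ (i', j') →
        (((i : ℕ) < i' ∧ (j' : ℕ) < j ∧ (i' : ℕ) = i + 1 ∧ (j : ℕ) = j' + 1) ∨
         ((i' : ℕ) < i ∧ (j : ℕ) < j' ∧ (i : ℕ) = i' + 1 ∧ (j' : ℕ) = j + 1)) :=
  fun h ↦ ⟨ncard_rungs_of_value_le_two hcross h,
    fun _ _ _ _ hij hij' hval hval' ↦
      trivial_cross_of_rungs_of_same_value hcross hij hij' (hval.trans hval'.symm)⟩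

/-- In a ladder with rails `P = p_1…p_ℓ` and `Q = q_1…q_m` in which all crosses are
trivial, for any value `h` there are at most two rungs `p_i q_j` with `i + j = h`, and
any two distinct rungs of the same value form a trivial cross. -/
theorem stmt14 {V : Type*} (L : SimpleGraph V) (l m : ℕ)
    (p : Fin l → V) (q : Fin m → V)
    (hpinj : Function.Injective p) (hqinj : Function.Injective q)
    (hdisj : ∀ i j, p i ≠ q j)
    (hP : ∀ i j : Fin l, L.Adj (p i) (p j) ↔ ((i : ℕ) + 1 = j ∨ (j : ℕ) + 1 = i))
    (hQ : ∀ i j : Fin m, L.Adj (q i) (q j) ↔ ((i : ℕ) + 1 = j ∨ (j : ℕ) + 1 = i))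
    (hcross : ∀ (a c : Fin l) (b d : Fin m), L.Adj (p a) (q b) → L.Adj (p c) (q d) →
      (a : ℕ) < c → (d : ℕ) < b → ((c : ℕ) = a + 1 ∧ (b : ℕ) = d + 1)) :
    ∀ h : ℕ,
      Set.ncard {x : Fin l × Fin m |
        L.Adj (p x.1) (q x.2) ∧ (x.1 : ℕ) + (x.2 : ℕ) = h} ≤ 2 ∧
      ∀ (i i' : Fin l) (j j' : Fin m), L.Adj (p i) (q j) → L.Adj (p i') (q j') →
        (i : ℕ) + (j : ℕ) = h → (i' : ℕ) + (j' : ℕ) = h → (i, j) ≠ (i', j') →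
        (((i : ℕ) < i' ∧ (j' : ℕ) < j ∧ (i' : ℕ) = i + 1 ∧ (j : ℕ) = j' + 1) ∨
         ((i' : ℕ) < i ∧ (j : ℕ) < j' ∧ (i : ℕ) = i' + 1 ∧ (j' : ℕ) = j + 1)) :=
  stmt14_general L l m p q hcross
end
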